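/- Let u, v : ℝ² → ℝ be smooth functions of (x,t) solving the KKS system, and suppose there is a compact set K ⊆ ℝ such that for every t the functions x ↦ u(x,t) and x ↦ v(x,t) are supported in K. Then the function t ↦ ∫_ℝ (2u(x,t)² − u(x,t)v(x,t) + v(x,t)²/9) dx is constant; that is, the functional ℋ₁ = ∫ H₁ dx is a conserved quantity of the KKS system. -/

import Mathlib

open MeasureTheory

open Function Set

noncomputable def pX (f : ℝ → ℝ → ℝ) : ℝ → ℝ → ℝ := fun x t => deriv (fun y => f y t) x
noncomputable def pT (f : ℝ → ℝ → ℝ) : ℝ → ℝ → ℝ := fun x t => deriv (fun s => f x s) t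

lemma hasDerivAt_sliceX {f : ℝ → ℝ → ℝ} (hf : ContDiff ℝ (⊤ : ℕ∞) (uncurry f)) (x t : ℝ) :
    HasDerivAt (fun y => f y t) (fderiv ℝ (uncurry f) (x, t) (1, 0)) x := by
  have hF : HasFDerivAt (uncurry f) (fderiv ℝ (uncurry f) (x, t)) (x, t) :=
    (hf.differentiable (by simp) (x, t)).hasFDerivAt
  have hg : HasFDerivAt (fun y : ℝ => (y, t))
      ((ContinuousLinearMap.id ℝ ℝ).prod 0) x :=
    (hasFDerivAt_id x).prodMk (hasFDerivAt_const t x)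
  simpa [Function.comp_def] using (hF.comp x hg).hasDerivAt

lemma pX_eq {f : ℝ → ℝ → ℝ} (hf : ContDiff ℝ (⊤ : ℕ∞) (uncurry f)) (x t : ℝ) :
    pX f x t = fderiv ℝ (uncurry f) (x, t) (1, 0) :=
  (hasDerivAt_sliceX hf x t).deriv

lemma hasDerivAt_pX {f : ℝ → ℝ → ℝ} (hf : ContDiff ℝ (⊤ : ℕ∞) (uncurry f)) (x t : ℝ) :
    HasDerivAt (fun y => f y t) (pX f x t) x := by
  rw [pX_eq hf]; exact hasDerivAt_sliceX hf x t

lemma contDiff_pX {f : ℝ → ℝ → ℝ} (hf : ContDiff ℝ (⊤ : ℕ∞) (uncurry f)) :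
    ContDiff ℝ (⊤ : ℕ∞) (uncurry (pX f)) := by
  have heq : uncurry (pX f) = fun p : ℝ × ℝ => fderiv ℝ (uncurry f) p (1, 0) := by
    funext p
    exact pX_eq hf p.1 p.2
  rw [heq]
  exact (hf.fderiv_right (by simp)).clm_apply contDiff_const

lemma hasDerivAt_sliceT {f : ℝ → ℝ → ℝ} (hf : ContDiff ℝ (⊤ : ℕ∞) (uncurry f)) (x t : ℝ) :
    HasDerivAt (fun s => f x s) (fderiv ℝ (uncurry f) (x, t) (0, 1)) t := by
  have hF : HasFDerivAt (uncurry f) (fderiv ℝ (uncurry f) (x, t)) (x, t) :=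
    (hf.differentiable (by simp) (x, t)).hasFDerivAt
  have hg : HasFDerivAt (fun s : ℝ => (x, s))
      ((0 : ℝ →L[ℝ] ℝ).prod (ContinuousLinearMap.id ℝ ℝ)) t :=
    (hasFDerivAt_const x t).prodMk (hasFDerivAt_id t)
  simpa [Function.comp_def] using (hF.comp t hg).hasDerivAt

lemma pT_eq {f : ℝ → ℝ → ℝ} (hf : ContDiff ℝ (⊤ : ℕ∞) (uncurry f)) (x t : ℝ) :
    pT f x t = fderiv ℝ (uncurry f) (x, t) (0, 1) :=
  (hasDerivAt_sliceT hf x t).deriv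

lemma hasDerivAt_pT {f : ℝ → ℝ → ℝ} (hf : ContDiff ℝ (⊤ : ℕ∞) (uncurry f)) (x t : ℝ) :
    HasDerivAt (fun s => f x s) (pT f x t) t := by
  rw [pT_eq hf]; exact hasDerivAt_sliceT hf x t

lemma contDiff_pT {f : ℝ → ℝ → ℝ} (hf : ContDiff ℝ (⊤ : ℕ∞) (uncurry f)) :
    ContDiff ℝ (⊤ : ℕ∞) (uncurry (pT f)) := by
  have heq : uncurry (pT f) = fun p : ℝ × ℝ => fderiv ℝ (uncurry f) p (0, 1) := by
    funext p
    exact pT_eq hf p.1 p.2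
  rw [heq]
  exact (hf.fderiv_right (by simp)).clm_apply contDiff_const

lemma supp_pX {f : ℝ → ℝ → ℝ} {K : Set ℝ} (hK : IsClosed K)
    (h : ∀ t, (support fun x => f x t) ⊆ K) (t : ℝ) {x : ℝ} (hx : x ∉ K) :
    pX f x t = 0 := by
  have hev : (fun y => f y t) =ᶠ[nhds x] (fun _ => (0:ℝ)) := by
    filter_upwards [hK.isOpen_compl.mem_nhds hx] with y hy
    by_contra hne
    exact hy (h t hne)
  simp [pX, hev.deriv_eq]

lemma suppX_pX {f : ℝ → ℝ → ℝ} {K : Set ℝ} (hK : IsClosed K)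
    (h : ∀ t, (support fun x => f x t) ⊆ K) (t : ℝ) :
    (support fun x => pX f x t) ⊆ K := by
  intro x hx
  by_contra hxK
  exact hx (supp_pX hK h t hxK)

lemma supp_pT {f : ℝ → ℝ → ℝ} {K : Set ℝ}
    (h : ∀ t, (support fun x => f x t) ⊆ K) (t : ℝ) {x : ℝ} (hx : x ∉ K) :
    pT f x t = 0 := by
  have : (fun s => f x s) = fun _ => (0:ℝ) := by
    funext s
    by_contra hne
    exact hx (h s hne)
  simp [pT, this]

lemma integral_deriv_zero (g : ℝ → ℝ) (hg : ContDiff ℝ 1 g) (h2 : HasCompactSupport g) :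
    ∫ x : ℝ, deriv g x = 0 := by
  have hi : Integrable (deriv g) :=
    (hg.continuous_deriv le_rfl).integrable_of_hasCompactSupport h2.deriv
  rw [← intervalIntegral.integral_Iic_add_Ioi (b := 0) hi.integrableOn hi.integrableOn,
    h2.integral_Iic_deriv_eq hg, h2.integral_Ioi_deriv_eq hg]
  ring


/-- For any smooth solution `(u, v)` of the KKS system whose `x`-supports
are contained in a fixed compact set `K` for all times, the functional
`ℋ₁ = ∫ (2u² − uv + v²/9) dx` is conserved in time. -/
theorem kks_conserved_H1 (u v : ℝ → ℝ → ℝ)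
    (hu : ContDiff ℝ (⊤ : ℕ∞) (Function.uncurry u)) (hv : ContDiff ℝ (⊤ : ℕ∞) (Function.uncurry v))
    (hut : ∀ x t : ℝ, deriv (fun s => u x s) t
      = 4 * iteratedDeriv 3 (fun y => u y t) x - iteratedDeriv 3 (fun y => v y t) x
        - 12 * u x t * deriv (fun y => u y t) x + v x t * deriv (fun y => u y t) x
        + 2 * u x t * deriv (fun y => v y t) x)
    (hvt : ∀ x t : ℝ, deriv (fun s => v x s) t
      = 9 * iteratedDeriv 3 (fun y => u y t) x - 2 * iteratedDeriv 3 (fun y => v y t) x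
        - 12 * v x t * deriv (fun y => u y t) x - 6 * u x t * deriv (fun y => v y t) x
        + 4 * v x t * deriv (fun y => v y t) x)
    (K : Set ℝ) (hK : IsCompact K)
    (hsupp : ∀ t : ℝ, (Function.support fun x => u x t) ⊆ K ∧
                      (Function.support fun x => v x t) ⊆ K) :
    ∀ t₁ t₂ : ℝ,
      (∫ x : ℝ, (2 * (u x t₁) ^ 2 - u x t₁ * v x t₁ + (v x t₁) ^ 2 / 9))
      = ∫ x : ℝ, (2 * (u x t₂) ^ 2 - u x t₂ * v x t₂ + (v x t₂) ^ 2 / 9) := by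
  intro t₁ t₂
  -- abbreviations for smoothness of the x-derivatives
  have hu1 : ContDiff ℝ (⊤ : ℕ∞) (uncurry (pX u)) := contDiff_pX hu
  have hu2 : ContDiff ℝ (⊤ : ℕ∞) (uncurry (pX (pX u))) := contDiff_pX hu1
  have hv1 : ContDiff ℝ (⊤ : ℕ∞) (uncurry (pX v)) := contDiff_pX hv
  have hv2 : ContDiff ℝ (⊤ : ℕ∞) (uncurry (pX (pX v))) := contDiff_pX hv1
  -- vanishing off K
  have hu0 : ∀ (t x : ℝ), x ∉ K → u x t = 0 := by
    intro t x hx; by_contra h; exact hx ((hsupp t).1 h)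
  have hv0 : ∀ (t x : ℝ), x ∉ K → v x t = 0 := by
    intro t x hx; by_contra h; exact hx ((hsupp t).2 h)
  have hsuppu : ∀ t, (support fun x => u x t) ⊆ K := fun t => (hsupp t).1
  have hsuppv : ∀ t, (support fun x => v x t) ⊆ K := fun t => (hsupp t).2
  have hsuppu1 : ∀ t, (support fun x => pX u x t) ⊆ K :=
    suppX_pX hK.isClosed hsuppu
  have hsuppv1 : ∀ t, (support fun x => pX v x t) ⊆ K :=
    suppX_pX hK.isClosed hsuppv
  -- identification of iterated derivatives
  have hiter : ∀ (f : ℝ → ℝ → ℝ) (x t : ℝ),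
      iteratedDeriv 3 (fun y => f y t) x = pX (pX (pX f)) x t := by
    intro f x t
    rw [show (3:ℕ) = 2 + 1 from rfl, iteratedDeriv_succ,
      show (2:ℕ) = 1 + 1 from rfl, iteratedDeriv_succ, iteratedDeriv_one]
    rfl
  have hderiv_slice : ∀ (f : ℝ → ℝ → ℝ) (x t : ℝ),
      deriv (fun y => f y t) x = pX f x t := fun _ _ _ => rfl
  -- the time derivative of the Hamiltonian density
  set Ht : ℝ → ℝ → ℝ := fun x t =>
    4 * (u x t * pT u x t) - (pT u x t * v x t + u x t * pT v x t)
      + 2 * (v x t * pT v x t) / 9 with hHtdef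
  have hHt : ∀ x t : ℝ, HasDerivAt
      (fun s => 2 * (u x s) ^ 2 - u x s * v x s + (v x s) ^ 2 / 9) (Ht x t) t := by
    intro x t
    have hU := hasDerivAt_pT hu x t
    have hV := hasDerivAt_pT hv x t
    have h := (((hU.pow 2).const_mul (2:ℝ)).sub (hU.mul hV)).add ((hV.pow 2).div_const 9)
    refine h.congr_deriv ?_
    simp [hHtdef]
    ring
  -- the flux
  set G : ℝ → ℝ → ℝ := fun x t =>
    7 * (u x t * pX (pX u) x t) - 7/2 * (pX u x t) ^ 2 - 2 * (v x t * pX (pX u) x t)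
      - 2 * (u x t * pX (pX v) x t) + 2 * (pX u x t * pX v x t)
      + 5/9 * (v x t * pX (pX v) x t) - 5/18 * (pX v x t) ^ 2
      - 16 * (u x t) ^ 3 + 14 * ((u x t) ^ 2 * v x t)
      - 11/3 * (u x t * (v x t) ^ 2) + 8/27 * (v x t) ^ 3 with hGdef
  have key : ∀ x t : ℝ, Ht x t = deriv (fun y => G y t) x := by
    intro x t
    have a0 := hasDerivAt_pX hu x t
    have a1 := hasDerivAt_pX hu1 x t
    have a2 := hasDerivAt_pX hu2 x t
    have b0 := hasDerivAt_pX hv x t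
    have b1 := hasDerivAt_pX hv1 x t
    have b2 := hasDerivAt_pX hv2 x t
    have h1 := (a0.mul a2).const_mul (7:ℝ)
    have h2 := (a1.pow 2).const_mul (7/2:ℝ)
    have h3 := (b0.mul a2).const_mul (2:ℝ)
    have h4 := (a0.mul b2).const_mul (2:ℝ)
    have h5 := (a1.mul b1).const_mul (2:ℝ)
    have h6 := (b0.mul b2).const_mul (5/9:ℝ)
    have h7 := (b1.pow 2).const_mul (5/18:ℝ)
    have h8 := (a0.pow 3).const_mul (16:ℝ)
    have h9 := ((a0.pow 2).mul b0).const_mul (14:ℝ)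
    have h10 := (a0.mul (b0.pow 2)).const_mul (11/3:ℝ)
    have h11 := (b0.pow 3).const_mul (8/27:ℝ)
    have hG := (((((((((h1.sub h2).sub h3).sub h4).add h5).add h6).sub h7).sub
      h8).add h9).sub h10).add h11
    have hG' : HasDerivAt (fun y => G y t) _ x := hG
    rw [hG'.deriv]
    have eut : pT u x t =
        4 * pX (pX (pX u)) x t - pX (pX (pX v)) x t
          - 12 * u x t * pX u x t + v x t * pX u x t + 2 * u x t * pX v x t := by
      show deriv (fun s => u x s) t = _
      rw [hut x t, hiter u x t, hiter v x t, hderiv_slice u x t, hderiv_slice v x t]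
    have evt : pT v x t =
        9 * pX (pX (pX u)) x t - 2 * pX (pX (pX v)) x t
          - 12 * v x t * pX u x t - 6 * u x t * pX v x t + 4 * v x t * pX v x t := by
      show deriv (fun s => v x s) t = _
      rw [hvt x t, hiter u x t, hiter v x t, hderiv_slice u x t, hderiv_slice v x t]
    rw [hHtdef]
    simp only [eut, evt]
    push_cast
    simp only [Pi.pow_apply]
    ring
  -- slice regularity helpers
  have sliceC : ∀ (f : ℝ → ℝ → ℝ), ContDiff ℝ (⊤ : ℕ∞) (uncurry f) →
      ∀ t, ContDiff ℝ (⊤ : ℕ∞) (fun y => f y t) := by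
    intro f hf t
    exact hf.comp (contDiff_id.prodMk contDiff_const)
  -- continuity facts
  have cu : Continuous fun p : ℝ × ℝ => u p.1 p.2 := hu.continuous
  have cv : Continuous fun p : ℝ × ℝ => v p.1 p.2 := hv.continuous
  have cptu : Continuous fun p : ℝ × ℝ => pT u p.1 p.2 := (contDiff_pT hu).continuous
  have cptv : Continuous fun p : ℝ × ℝ => pT v p.1 p.2 := (contDiff_pT hv).continuous
  have hHtc : Continuous fun p : ℝ × ℝ => Ht p.1 p.2 := by
    rw [hHtdef]
    fun_prop
  -- the conserved functional
  set F : ℝ → ℝ := fun t => ∫ x : ℝ, (2 * (u x t) ^ 2 - u x t * v x t + (v x t) ^ 2 / 9)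
    with hFdef
  have hF0 : ∀ t₀ : ℝ, HasDerivAt F 0 t₀ := by
    intro t₀
    -- a uniform bound near t₀
    obtain ⟨C, hC⟩ := (hK.prod (isCompact_Icc (a := t₀ - 1) (b := t₀ + 1))).exists_bound_of_continuousOn
      hHtc.continuousOn
    have hmeas : ∀ t : ℝ, AEStronglyMeasurable
        (fun x => 2 * (u x t) ^ 2 - u x t * v x t + (v x t) ^ 2 / 9) volume := by
      intro t
      have : Continuous fun x => 2 * (u x t) ^ 2 - u x t * v x t + (v x t) ^ 2 / 9 := by
        have h1 : Continuous fun x : ℝ => u x t :=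
          cu.comp (continuous_id.prodMk continuous_const)
        have h2 : Continuous fun x : ℝ => v x t :=
          cv.comp (continuous_id.prodMk continuous_const)
        fun_prop
      exact this.aestronglyMeasurable
    have hint : Integrable (fun x => 2 * (u x t₀) ^ 2 - u x t₀ * v x t₀ + (v x t₀) ^ 2 / 9) := by
      have hc : Continuous fun x => 2 * (u x t₀) ^ 2 - u x t₀ * v x t₀ + (v x t₀) ^ 2 / 9 := by
        have h1 : Continuous fun x : ℝ => u x t₀ :=
          cu.comp (continuous_id.prodMk continuous_const)
        have h2 : Continuous fun x : ℝ => v x t₀ :=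
          cv.comp (continuous_id.prodMk continuous_const)
        fun_prop
      refine hc.integrable_of_hasCompactSupport (HasCompactSupport.intro hK ?_)
      intro x hx
      simp [hu0 t₀ x hx, hv0 t₀ x hx]
    have hHtmeas : AEStronglyMeasurable (fun x => Ht x t₀) volume :=
      (hHtc.comp (continuous_id.prodMk continuous_const)).aestronglyMeasurable
    have hHt0 : ∀ (t x : ℝ), x ∉ K → Ht x t = 0 := by
      intro t x hx
      rw [hHtdef]
      simp [hu0 t x hx, hv0 t x hx, supp_pT hsuppu t hx, supp_pT hsuppv t hx]
    have hbound : ∀ᵐ x : ℝ, ∀ t ∈ Metric.ball t₀ 1, ‖Ht x t‖ ≤ K.indicator (fun _ => |C|) x := by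
      refine Filter.Eventually.of_forall fun x t ht => ?_
      by_cases hxK : x ∈ K
      · rw [Set.indicator_of_mem hxK]
        have htI : t ∈ Icc (t₀ - 1) (t₀ + 1) := by
          rw [Metric.mem_ball, Real.dist_eq] at ht
          have h1 := (abs_lt.mp ht).1
          have h2 := (abs_lt.mp ht).2
          constructor <;> [linarith; linarith]
        exact le_trans (hC (x, t) ⟨hxK, htI⟩) (le_abs_self C)
      · rw [Set.indicator_of_notMem hxK, hHt0 t x hxK]
        simp
    have hbint : Integrable (K.indicator fun _ : ℝ => |C|) := by
      rw [integrable_indicator_iff hK.isClosed.measurableSet]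
      exact integrableOn_const hK.measure_lt_top.ne
    have hdiff : ∀ᵐ x : ℝ, ∀ t ∈ Metric.ball t₀ 1,
        HasDerivAt (fun s => 2 * (u x s) ^ 2 - u x s * v x s + (v x s) ^ 2 / 9) (Ht x t) t :=
      Filter.Eventually.of_forall fun x t _ => hHt x t
    have := hasDerivAt_integral_of_dominated_loc_of_deriv_le (μ := volume)
      (F := fun t x => 2 * (u x t) ^ 2 - u x t * v x t + (v x t) ^ 2 / 9)
      (F' := fun t x => Ht x t) (x₀ := t₀) (bound := K.indicator fun _ => |C|)
      (Metric.ball_mem_nhds t₀ zero_lt_one) (Filter.Eventually.of_forall hmeas) hint hHtmeas hbound hbint hdiff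
    have hFd : HasDerivAt F (∫ x : ℝ, Ht x t₀) t₀ := this.2
    have hzero : (∫ x : ℝ, Ht x t₀) = 0 := by
      have hre : (fun x : ℝ => Ht x t₀) = fun x => deriv (fun y => G y t₀) x :=
        funext fun x => key x t₀
      rw [hre]
      have hGc : ContDiff ℝ 1 (fun y => G y t₀) := by
        have s1 := sliceC u hu t₀
        have s2 := sliceC v hv t₀
        have s3 := sliceC (pX u) hu1 t₀
        have s4 := sliceC (pX v) hv1 t₀
        have s5 := sliceC (pX (pX u)) hu2 t₀
        have s6 := sliceC (pX (pX v)) hv2 t₀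
        have : ContDiff ℝ (⊤ : ℕ∞) (fun y => G y t₀) := by
          rw [hGdef]
          fun_prop
        exact this.of_le (by simp)
      have hGsupp : HasCompactSupport (fun y => G y t₀) := by
        refine HasCompactSupport.intro hK ?_
        intro x hx
        rw [hGdef]
        simp [hu0 t₀ x hx, hv0 t₀ x hx, supp_pX hK.isClosed hsuppu t₀ hx,
          supp_pX hK.isClosed hsuppv t₀ hx, supp_pX hK.isClosed hsuppu1 t₀ hx,
          supp_pX hK.isClosed hsuppv1 t₀ hx]
      exact integral_deriv_zero _ hGc hGsupp
    rwa [hzero] at hFd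
  exact is_const_of_deriv_eq_zero (fun t => (hF0 t).differentiableAt)
    (fun t => (hF0 t).deriv) t₁ t₂
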